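/- Let n,m be positive integers, Q > 0, w ≥ 1. Let 0 < h₁ < ⋯ < hₙ and 0 < g₁ < ⋯ < g_m, let p ∈ ℝⁿ and q ∈ ℝᵐ be probability vectors with positive entries, and set aᵢ = 1/hᵢ², bⱼ = 1/gⱼ². Assume Σᵢ pᵢ/aᵢ < w Σⱼ qⱼ/bⱼ. Suppose A is an n×m matrix with nonnegative entries such that (i) each column of A sums to 1, (ii) Σᵢ Aᵢⱼ aᵢ = bⱼ for every j, and (iii) for every k ∈ {1,…,n}, Σ_{i=1}^k pᵢ/aᵢ ≤ w Σⱼ (qⱼ/bⱼ)(Σ_{i=1}^k Aᵢⱼ). Then for every f ∈ ℝⁿ satisfying fₙ ≥ ½log₂(2πe/hₙ²), f₁ ≤ ½log₂(2πe(Q + 1/h₁²)), and 2^{2fᵢ} − 2πe/hᵢ² ≥ 2^{2f_k} − 2πe/h_k² whenever i < k, one has Σᵢ pᵢ fᵢ − (w/2) Σⱼ qⱼ log₂(Σᵢ Aᵢⱼ 2^{2fᵢ}) ≤ ½ Σᵢ pᵢ log₂(2πe aᵢ) − (w/2) Σⱼ qⱼ log₂(2πe bⱼ); i.e., the point fᵢ*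 = ½log₂(2πe/hᵢ²) is optimal for this constrained maximization. -/

import Mathlib

/-!
Put `sᵢ = 2^{2fᵢ}/(2πe)`. The constraint on `fₙ` and the entropy-power constraints say that
`aᵢ ≤ sᵢ` and that the gaps `sᵢ - aᵢ` decrease in `i`; with `uᵢ = log (sᵢ/aᵢ) ≥ 0` the claim
becomes `∑ pᵢ uᵢ ≤ w ∑ⱼ qⱼ log (∑ᵢ Aᵢⱼ sᵢ / bⱼ)`. Jensen's inequality with the weights
`Aᵢⱼ aᵢ / bⱼ` bounds the `j`-th logarithm below by `∑ᵢ (Aᵢⱼ aᵢ / bⱼ) uᵢ`. Since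
`aᵢ uᵢ = aᵢ log (1 + (sᵢ - aᵢ)/aᵢ)` decreases in `i`, Abel summation against the prefix-sum
condition on `A` finishes the comparison.
-/

open Finset Real

theorem Finset.sum_mul_nonneg_of_partial_sums_nonneg {ι R : Type*} [LinearOrder ι]
    [CommRing R] [LinearOrder R] [IsStrictOrderedRing R]
    (s : Finset ι) (d v : ι → R) (hv : AntitoneOn v s) (hv0 : ∀ i ∈ s, 0 ≤ v i)
    (hd : ∀ k ∈ s, 0 ≤ ∑ i ∈ s with i ≤ k, d i) :
    0 ≤ ∑ i ∈ s, d i * v i := by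
  classical
  induction s using Finset.induction_on_max generalizing v with
  | empty => simp
  | insert M s hlt ih =>
    have hM : M ∉ s := fun h => (hlt M h).false
    have hvM : ∀ i ∈ s, v M ≤ v i := fun i hi =>
      hv (mem_insert_of_mem hi) (mem_insert_self M s) (hlt i hi).le
    have hprefix : ∀ k ∈ s, {i ∈ insert M s | i ≤ k} = {i ∈ s | i ≤ k} := fun k hk => by
      rw [filter_insert, if_neg (not_le.2 (hlt k hk))]
    have hrest : 0 ≤ ∑ i ∈ s, d i * (v i - v M) :=
      ih (fun i => v i - v M)
        (fun i hi k hk hik =>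
          sub_le_sub_right (hv (mem_insert_of_mem hi) (mem_insert_of_mem hk) hik) _)
        (fun i hi => sub_nonneg.2 (hvM i hi))
        (fun k hk => hprefix k hk ▸ hd k (mem_insert_of_mem hk))
    have hle : ∀ i ∈ insert M s, i ≤ M := fun i hi =>
      (mem_insert.1 hi).elim le_of_eq fun h => (hlt i h).le
    have htotal : 0 ≤ ∑ i ∈ insert M s, d i := by
      simpa only [filter_true_of_mem hle] using hd M (mem_insert_self M s)
    calc 0 ≤ ∑ i ∈ s, d i * (v i - v M) + v M * ∑ i ∈ insert M s, d i :=
          add_nonneg hrest (mul_nonneg (hv0 M (mem_insert_self M s)) htotal)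
      _ = ∑ i ∈ insert M s, d i * v i := by
          simp only [sum_insert hM, mul_sub, sum_sub_distrib, ← sum_mul]
          ring

theorem mul_log_div_le_of_sub_le {x y s r : ℝ} (hx : 0 < x) (hxy : x ≤ y) (hxs : x ≤ s)
    (hsr : s - x ≤ r - y) : x * log (s / x) ≤ y * log (r / y) := by
  have hy : 0 < y := hx.trans_le hxy
  have hconc := strictConcaveOn_log_Ioi.concaveOn.2 (Set.mem_Ioi.2 (div_pos (hx.trans_le hxs) hx))
    (Set.mem_Ioi.2 one_pos) (div_nonneg hx.le hy.le) (sub_nonneg.2 ((div_le_one hy).2 hxy))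
    (add_sub_cancel (x / y) 1)
  have hmix : x / y * (s / x) + (1 - x / y) * 1 = (s - x + y) / y := by field_simp; ring
  simp only [smul_eq_mul, log_one, mul_zero, add_zero, hmix] at hconc
  calc x * log (s / x) = y * (x / y * log (s / x)) := by field_simp
    _ ≤ y * log ((s - x + y) / y) := mul_le_mul_of_nonneg_left hconc hy.le
    _ ≤ y * log (r / y) := by
        gcongr
        linarith

theorem sum_mul_log_div_le_log_sum_div {ι : Type*} (s : Finset ι) {A a t : ι → ℝ} {b : ℝ}
    (hA : ∀ i ∈ s, 0 ≤ A i) (ha : ∀ i ∈ s, 0 < a i) (ht : ∀ i ∈ s, 0 < t i) (hb : 0 < b)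
    (hAa : ∑ i ∈ s, A i * a i = b) :
    ∑ i ∈ s, A i * a i / b * log (t i / a i) ≤ log ((∑ i ∈ s, A i * t i) / b) := by
  have hweights : ∑ i ∈ s, A i * a i / b = 1 := by rw [← sum_div, hAa, div_self hb.ne']
  have hmean : ∑ i ∈ s, A i * a i / b * (t i / a i) = (∑ i ∈ s, A i * t i) / b := by
    rw [sum_div]
    refine sum_congr rfl fun i hi => ?_
    field_simp [(ha i hi).ne']
  simpa only [smul_eq_mul, hmean] using strictConcaveOn_log_Ioi.concaveOn.le_map_sum
    (fun i hi => div_nonneg (mul_nonneg (hA i hi) (ha i hi).le) hb.le) hweights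
    (fun i hi => Set.mem_Ioi.2 (div_pos (ht i hi) (ha i hi)))

theorem sum_mul_log_div_le_of_majorization {ι κ : Type*} [Fintype ι] [LinearOrder ι]
    [LocallyFiniteOrderBot ι] [Fintype κ] {a t p : ι → ℝ} {b q : κ → ℝ} {A : Matrix ι κ ℝ} {w : ℝ}
    (ha : ∀ i, 0 < a i) (ha_anti : Antitone a)
    (hb : ∀ j, 0 < b j) (hA : ∀ i j, 0 ≤ A i j) (hAa : ∀ j, ∑ i, A i j * a i = b j)
    (hq : ∀ j, 0 ≤ q j) (hw : 0 ≤ w)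
    (hmaj : ∀ k, ∑ i ∈ Iic k, p i / a i ≤ w * ∑ j, (q j / b j) * ∑ i ∈ Iic k, A i j)
    (hat : ∀ i, a i ≤ t i) (hgap : Antitone fun i => t i - a i) :
    ∑ i, p i * log (t i / a i) ≤ w * ∑ j, q j * log ((∑ i, A i j * t i) / b j) := by
  set u : ι → ℝ := fun i => log (t i / a i)
  have hu_anti : Antitone fun i => a i * u i := fun i k hik =>
    mul_log_div_le_of_sub_le (ha k) (ha_anti hik) (hat k) (hgap hik)
  have hu_nonneg : ∀ i, 0 ≤ a i * u i := fun i =>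
    mul_nonneg (ha i).le (log_nonneg ((one_le_div (ha i)).2 (hat i)))
  have habel : ∑ i, p i * u i ≤ w * ∑ j, q j * ∑ i, A i j * a i / b j * u i := by
    have hd : ∀ k, 0 ≤ ∑ i ∈ Iic k, (w * ∑ j, q j / b j * A i j - p i / a i) := fun k => by
      rw [sum_sub_distrib, ← mul_sum, sum_comm]
      simpa only [mul_sum] using sub_nonneg.2 (hmaj k)
    have hsum := sum_mul_nonneg_of_partial_sums_nonneg univ
      (fun i => w * ∑ j, q j / b j * A i j - p i / a i) _ (hu_anti.antitoneOn _)
      (fun i _ => hu_nonneg i) (fun k _ => by simpa only [filter_ge_eq_Iic] using hd k)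
    have hexpand : ∑ i, (w * ∑ j, q j / b j * A i j - p i / a i) * (a i * u i)
        = w * ∑ j, q j * ∑ i, A i j * a i / b j * u i - ∑ i, p i * u i := by
      simp only [sub_mul, sum_sub_distrib, mul_sum, sum_mul]
      rw [sum_comm]
      congr 1
      · refine sum_congr rfl fun j _ => sum_congr rfl fun i _ => ?_
        field_simp [(hb j).ne']
      · refine sum_congr rfl fun i _ => ?_
        field_simp [(ha i).ne']
    linarith
  calc ∑ i, p i * u i ≤ w * ∑ j, q j * ∑ i, A i j * a i / b j * u i := habel
    _ ≤ w * ∑ j, q j * log ((∑ i, A i j * t i) / b j) := by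
      gcongr with j
      · exact hq j
      · exact sum_mul_log_div_le_log_sum_div univ (fun i _ => hA i j) (fun i _ => ha i)
          (fun i _ => (ha i).trans_le (hat i)) (hb j) (hAa j)

theorem le_div_and_antitone_div_sub {ι : Type*} [LinearOrder ι] [OrderTop ι] {c : ℝ} (hc : 0 < c)
    {a T : ι → ℝ} (htop : c * a ⊤ ≤ T ⊤) (hT : ∀ i k, i < k → T k - c * a k ≤ T i - c * a i) :
    (∀ i, a i ≤ T i / c) ∧ Antitone fun i => T i / c - a i := by
  have hgap_eq : ∀ i, T i / c - a i = (T i - c * a i) / c := fun i => by field_simp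
  have hgap : Antitone fun i => T i / c - a i := fun i k hik => by
    rcases hik.eq_or_lt with rfl | hlt
    · rfl
    · simp only [hgap_eq]
      exact div_le_div_of_nonneg_right (hT i k hlt) hc.le
  refine ⟨fun i => ?_, hgap⟩
  have h0 : 0 ≤ T ⊤ / c - a ⊤ := by
    rw [hgap_eq]; exact div_nonneg (sub_nonneg.2 htop) hc.le
  exact sub_nonneg.1 (h0.trans (hgap le_top))

theorem stmt2_general (n m : ℕ) (w : ℝ) (hw : 1 ≤ w)
    (h : Fin (n + 1) → ℝ) (g : Fin (m + 1) → ℝ)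
    (hh0 : ∀ i, 0 < h i) (hhmono : StrictMono h)
    (hg0 : ∀ j, 0 < g j)
    (p : Fin (n + 1) → ℝ) (q : Fin (m + 1) → ℝ)
    (hq : ∀ j, 0 < q j)
    (a : Fin (n + 1) → ℝ) (b : Fin (m + 1) → ℝ)
    (ha : ∀ i, a i = 1 / (h i) ^ 2)
    (hb : ∀ j, b j = 1 / (g j) ^ 2)
    (A : Matrix (Fin (n + 1)) (Fin (m + 1)) ℝ)
    (hA0 : ∀ i j, 0 ≤ A i j)
    (hAa : ∀ j, ∑ i, A i j * a i = b j)
    (hmaj : ∀ k : Fin (n + 1), ∑ i ∈ Finset.Iic k, p i / a i ≤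
      w * ∑ j, (q j / b j) * ∑ i ∈ Finset.Iic k, A i j)
    (f : Fin (n + 1) → ℝ)
    (hfn : f (Fin.last n) ≥
      (1 / 2) * Real.logb 2 (2 * Real.pi * Real.exp 1 / (h (Fin.last n)) ^ 2))
    (hEPI : ∀ i k : Fin (n + 1), i < k →
      (2 : ℝ) ^ (2 * f i) - 2 * Real.pi * Real.exp 1 / (h i) ^ 2 ≥
      (2 : ℝ) ^ (2 * f k) - 2 * Real.pi * Real.exp 1 / (h k) ^ 2) :
    ∑ i, p i * f i - (w / 2) * ∑ j, q j * Real.logb 2 (∑ i, A i j * (2 : ℝ) ^ (2 * f i)) ≤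
      (1 / 2) * ∑ i, p i * Real.logb 2 (2 * Real.pi * Real.exp 1 * a i) -
      (w / 2) * ∑ j, q j * Real.logb 2 (2 * Real.pi * Real.exp 1 * b j) := by
  set c := 2 * π * exp 1
  have hc : 0 < c := by positivity
  have ha0 : ∀ i, 0 < a i := fun i => by rw [ha]; have := hh0 i; positivity
  have hb0 : ∀ j, 0 < b j := fun j => by rw [hb]; have := hg0 j; positivity
  have hca : ∀ i, c / h i ^ 2 = c * a i := fun i => by rw [ha, mul_one_div]
  have ha_anti : Antitone a := fun i k hik => by
    rw [ha, ha]; have := hh0 i; gcongr; exact hhmono.monotone hik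
  have hlast : c * a (Fin.last n) ≤ (2 : ℝ) ^ (2 * f (Fin.last n)) :=
    (logb_le_iff_le_rpow one_lt_two (mul_pos hc (ha0 _))).1 (by rw [← hca]; linarith)
  set s : Fin (n + 1) → ℝ := fun i => (2 : ℝ) ^ (2 * f i) / c
  obtain ⟨hat, hgap⟩ : (∀ i, a i ≤ s i) ∧ Antitone fun i => s i - a i :=
    le_div_and_antitone_div_sub hc hlast
      fun i k hik => by simpa only [hca, ge_iff_le] using hEPI i k hik
  have key : ∑ i, p i * log (s i / a i) ≤ w * ∑ j, q j * log ((∑ i, A i j * s i) / b j) :=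
    sum_mul_log_div_le_of_majorization ha0 ha_anti hb0 hA0 hAa (fun j => (hq j).le)
    (by linarith) hmaj hat hgap
  have hlog : ∀ {x y : ℝ}, x ≠ 0 → y ≠ 0 → log (x / y) = log 2 * (logb 2 x - logb 2 y) :=
    fun hx hy => by rw [log_div hx hy, logb, logb]; field_simp
  have hrow : ∀ i, log (s i / a i) = log 2 * (2 * f i - logb 2 (c * a i)) := fun i => by
    rw [div_div, hlog (by positivity) (mul_pos hc (ha0 i)).ne', logb_rpow two_pos (by norm_num)]
  have hcol : ∀ j, log ((∑ i, A i j * s i) / b j)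
      = log 2 * (logb 2 (∑ i, A i j * (2 : ℝ) ^ (2 * f i)) - logb 2 (c * b j)) := fun j => by
    have hb_le : b j ≤ ∑ i, A i j * s i :=
      hAa j ▸ sum_le_sum fun i _ => mul_le_mul_of_nonneg_left (hat i) (hA0 i j)
    have hsum : ∑ i, A i j * s i = (∑ i, A i j * (2 : ℝ) ^ (2 * f i)) / c := by
      simp only [s, mul_div_assoc, sum_div]
    rw [hsum] at hb_le ⊢
    rw [div_div, hlog ((div_pos_iff_of_pos_right hc).1 ((hb0 j).trans_le hb_le)).ne'
      (mul_pos hc (hb0 j)).ne']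
  simp only [hrow, hcol, mul_left_comm (p _) (log 2), mul_left_comm (q _) (log 2), ← mul_sum,
    mul_left_comm w] at key
  have key2 := le_of_mul_le_mul_left key (log_pos one_lt_two)
  simp only [mul_sub, sum_sub_distrib, mul_left_comm (p _) 2, ← mul_sum] at key2 ⊢
  linarith

/-- Optimization core of Case 3 of Theorem 1 (the case `r(w,0) < 0`): with
`aᵢ = 1/hᵢ²`, `bⱼ = 1/gⱼ²`, `∑ pᵢ/aᵢ < w ∑ qⱼ/bⱼ`, and a nonnegative matrix `A`
whose columns sum to `1`, mix the `aᵢ` into the `bⱼ`, and satisfy the (prefix-sum)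
majorization requirement, the point `fᵢ* = ½ log₂(2πe/hᵢ²)` is optimal for the
constrained maximization problem (opt2). Logs are base 2. -/
theorem stmt2 (n m : ℕ) (Q w : ℝ) (hQ : 0 < Q) (hw : 1 ≤ w)
    (h : Fin (n + 1) → ℝ) (g : Fin (m + 1) → ℝ)
    (hh0 : ∀ i, 0 < h i) (hhmono : StrictMono h)
    (hg0 : ∀ j, 0 < g j) (hgmono : StrictMono g)
    (p : Fin (n + 1) → ℝ) (q : Fin (m + 1) → ℝ)
    (hp : ∀ i, 0 < p i) (hpsum : ∑ i, p i = 1)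
    (hq : ∀ j, 0 < q j) (hqsum : ∑ j, q j = 1)
    (a : Fin (n + 1) → ℝ) (b : Fin (m + 1) → ℝ)
    (ha : ∀ i, a i = 1 / (h i) ^ 2)
    (hb : ∀ j, b j = 1 / (g j) ^ 2)
    (hbal : ∑ i, p i / a i < w * ∑ j, q j / b j)
    (A : Matrix (Fin (n + 1)) (Fin (m + 1)) ℝ)
    (hA0 : ∀ i j, 0 ≤ A i j)
    (hAcol : ∀ j, ∑ i, A i j = 1)
    (hAa : ∀ j, ∑ i, A i j * a i = b j)
    (hmaj : ∀ k : Fin (n + 1), ∑ i ∈ Finset.Iic k, p i / a i ≤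
      w * ∑ j, (q j / b j) * ∑ i ∈ Finset.Iic k, A i j)
    (f : Fin (n + 1) → ℝ)
    (hfn : f (Fin.last n) ≥
      (1 / 2) * Real.logb 2 (2 * Real.pi * Real.exp 1 / (h (Fin.last n)) ^ 2))
    (hf1 : f 0 ≤ (1 / 2) * Real.logb 2 (2 * Real.pi * Real.exp 1 * (Q + 1 / (h 0) ^ 2)))
    (hEPI : ∀ i k : Fin (n + 1), i < k →
      (2 : ℝ) ^ (2 * f i) - 2 * Real.pi * Real.exp 1 / (h i) ^ 2 ≥
      (2 : ℝ) ^ (2 * f k) - 2 * Real.pi * Real.exp 1 / (h k) ^ 2) :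
    ∑ i, p i * f i - (w / 2) * ∑ j, q j * Real.logb 2 (∑ i, A i j * (2 : ℝ) ^ (2 * f i)) ≤
      (1 / 2) * ∑ i, p i * Real.logb 2 (2 * Real.pi * Real.exp 1 * a i) -
      (w / 2) * ∑ j, q j * Real.logb 2 (2 * Real.pi * Real.exp 1 * b j) :=
  stmt2_general n m w hw h g hh0 hhmono hg0 p q hq a b ha hb A hA0 hAa hmaj f hfn hEPI
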